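/- arXiv:1306.2294 — 2 statements merged into one kernel-verified Lean document; each statement's English description precedes it below -/
import Mathlib

section
/- Let κ > 0 and let f : ℝ → ℝ be differentiable with f′(v) ≥ κ(1 + v⁴) for all v ∈ ℝ. Then there exists β > 0 such that for all a, b ∈ ℝ: (f(a) − f(b))·(a − b) ≥ β·(1 + |a| + |b|)⁴·(a − b)². -/
/-!
The antiderivative `p v = (κ / 5)(5 v + v⁵)` of the lower bound satisfies `p' ≤ f'`, so
`f - p` is nondecreasing and the difference quotient of `f` dominates that of `p`. Since
`(5 a + a⁵ - 5 b - b⁵) / (a - b) = 5 + a⁴ + a³b + a²b² + ab³ + b⁴ ≥ 5 + (a⁴ + b⁴) / 2`, the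
claim follows from the power mean inequality `(1 + |a| + |b|)⁴ ≤ 27 (1 + a⁴ + b⁴)`, with
`β = κ / 270`.
-/

lemma sub_mul_sub_le_sub_mul_sub_of_deriv_le {f g : ℝ → ℝ} (hf : Differentiable ℝ f)
    (hg : Differentiable ℝ g) (hgf : ∀ v, deriv g v ≤ deriv f v) (a b : ℝ) :
    (g a - g b) * (a - b) ≤ (f a - f b) * (a - b) := by
  have hmono : Monotone (f - g) := by
    refine monotone_of_deriv_nonneg (hf.sub hg) fun v => ?_
    rw [deriv_sub (hf v) (hg v)]
    exact sub_nonneg.2 (hgf v)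
  have := (hmono.monovary monotone_id).sub_mul_sub_nonneg a b
  simp only [Pi.sub_apply, id] at this
  linear_combination this

lemma one_add_abs_add_abs_pow_four_le (a b : ℝ) :
    (1 + |a| + |b|) ^ 4 ≤ 27 * (1 + a ^ 4 + b ^ 4) := by
  have h := pow_sum_div_card_le_sum_pow (s := Finset.univ) (f := ![1, |a|, |b|])
    (fun i _ => by fin_cases i <;> simp) 3
  simp only [Fin.sum_univ_three, Finset.card_univ, Fintype.card_fin, Matrix.cons_val_zero,
    Matrix.cons_val_one, Matrix.cons_val, Nat.reduceAdd, one_pow,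
    Even.pow_abs (by decide : Even 4)] at h
  linarith

lemma one_add_pow_four_add_pow_four_mul_sq_le (a b : ℝ) :
    (1 + a ^ 4 + b ^ 4) * (a - b) ^ 2 ≤ 2 * ((5 * a + a ^ 5 - (5 * b + b ^ 5)) * (a - b)) := by
  -- `2 (a⁴ + a³b + a²b² + ab³ + b⁴) - (a⁴ + b⁴) = (a² + b²)(a + b)²`
  nlinarith [mul_nonneg (sq_nonneg (a - b)) (mul_nonneg (sq_nonneg (a + b))
    (add_nonneg (sq_nonneg a) (sq_nonneg b))), sq_nonneg (a - b)]

/-- If `f : ℝ → ℝ` is differentiable with `f'(v) ≥ κ(1 + v⁴)` for some `κ > 0`, then there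
is `β > 0` with `(f(a) − f(b))(a − b) ≥ β(1 + |a| + |b|)⁴(a − b)²` for all `a, b`. -/
theorem stmt8 (κ : ℝ) (hκ : 0 < κ) (f : ℝ → ℝ) (hf : Differentiable ℝ f)
    (hf' : ∀ v : ℝ, κ * (1 + v ^ 4) ≤ deriv f v) :
    ∃ β : ℝ, 0 < β ∧ ∀ a b : ℝ,
      β * (1 + |a| + |b|) ^ 4 * (a - b) ^ 2 ≤ (f a - f b) * (a - b) := by
  set p : ℝ → ℝ := fun v => κ / 5 * (5 * v + v ^ 5)
  have hp : ∀ v, HasDerivAt p (κ * (1 + v ^ 4)) v := fun v => by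
    refine ((((hasDerivAt_id v).const_mul 5).add (hasDerivAt_pow 5 v)).const_mul
      (κ / 5)).congr_deriv ?_
    norm_num
    ring
  have hpf : ∀ v, deriv p v ≤ deriv f v := fun v => (hp v).deriv ▸ hf' v
  refine ⟨κ / 270, by positivity, fun a b => ?_⟩
  calc κ / 270 * (1 + |a| + |b|) ^ 4 * (a - b) ^ 2
      ≤ κ / 270 * (27 * (1 + a ^ 4 + b ^ 4)) * (a - b) ^ 2 := by
        gcongr
        exact one_add_abs_add_abs_pow_four_le a b
    _ = κ / 10 * ((1 + a ^ 4 + b ^ 4) * (a - b) ^ 2) := by ring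
    _ ≤ κ / 10 * (2 * ((5 * a + a ^ 5 - (5 * b + b ^ 5)) * (a - b))) :=
        mul_le_mul_of_nonneg_left (one_add_pow_four_add_pow_four_mul_sq_le a b) (by positivity)
    _ = (p a - p b) * (a - b) := by ring
    _ ≤ (f a - f b) * (a - b) :=
        sub_mul_sub_le_sub_mul_sub_of_deriv_le hf (fun v => (hp v).differentiableAt) hpf a b
end

section
/- Let β, C > 0 and L ≥ 0, and let f : ℝ → ℝ satisfy, for all a, b ∈ ℝ: (i) (f(a) − f(b))(a − b) ≥ β(1 + |a| + |b|)⁴(a − b)², (ii) |f(a) − f(b)| ≤ C(1 + |a| + |b|)⁴|a − b|, and (iii) |f(a)| ≤ C(1 + |a|⁵). Then there exists a constant C₁ > 0 (depending only on β, C and L) such that for all a, b ∈ ℝ, all r ≥ 0, and all ψ₁, ψ₂ ∈ [0,1] with |ψ₁ − ψ₂| ≤ L·r, the following lower bound holds: (ψ₁·f(a) − ψ₂·f(b))·(ψ₁·a − ψ₂·b) ≥ (β/2)·ψ₁²·(1 + |a| + |b|)⁴·(a − b)² − C₁·r²·(1 + |a|⁶ + |b|⁶). -/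
/-!
Write `d = ψ₁ - ψ₂` and `M = 1 + |a| + |b|`. The pairing splits as
`ψ₁² (f a - f b)(a - b) + ψ₁ d ((f a - f b) b + f b (a - b)) + d² f b b`.
Monotonicity bounds the first term below by `β ψ₁² M⁴ (a - b)²`; the growth bounds make the
middle term at most `2 C |ψ₁| |d| M⁵ |a - b|` and the last at most `C d² M⁶` in size.
Young's inequality spends half of the first term on the middle one, leaving only multiples of
`d² M⁶ ≤ L² r² M⁶`, and `M⁶ ≤ 3⁵ (1 + |a|⁶ + |b|⁶)` by convexity.
-/

lemma mul_le_half_mul_sq_add_sq_div {ε : ℝ} (hε : 0 < ε) (x y : ℝ) :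
    x * y ≤ ε / 2 * x ^ 2 + y ^ 2 / (2 * ε) := by
  have key : ε / 2 * x ^ 2 + y ^ 2 / (2 * ε) - x * y = (ε * x - y) ^ 2 / (2 * ε) := by
    field_simp
    ring
  have : 0 ≤ (ε * x - y) ^ 2 / (2 * ε) := by positivity
  linarith

lemma add_add_pow_succ_le {x y z : ℝ} (hx : 0 ≤ x) (hy : 0 ≤ y) (hz : 0 ≤ z) (n : ℕ) :
    (x + y + z) ^ (n + 1) ≤ 3 ^ n * (x ^ (n + 1) + y ^ (n + 1) + z ^ (n + 1)) := by
  have h := pow_sum_le_card_mul_sum_pow (s := Finset.univ) (f := ![x, y, z])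
    (by simp [Fin.forall_fin_succ, hx, hy, hz]) n
  simpa [Fin.sum_univ_three, add_assoc] using h

lemma mul_sub_mul_mul_mul_sub_mul_eq {R : Type*} [CommRing R] (ψ₁ ψ₂ x y a b : R) :
    (ψ₁ * x - ψ₂ * y) * (ψ₁ * a - ψ₂ * b) =
      ψ₁ ^ 2 * ((x - y) * (a - b)) + ψ₁ * (ψ₁ - ψ₂) * ((x - y) * b + y * (a - b)) +
        (ψ₁ - ψ₂) ^ 2 * (y * b) := by
  ring

section GrowthBounds

variable {C : ℝ} {f : ℝ → ℝ}

lemma abs_apply_le_of_growth (hC : 0 < C) (h3 : ∀ a : ℝ, |f a| ≤ C * (1 + |a| ^ 5))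
    (a b : ℝ) : |f b| ≤ C * (1 + |a| + |b|) ^ 5 := by
  have hb : 1 + |b| ^ 5 ≤ (1 + |a| + |b|) ^ 5 :=
    calc 1 + |b| ^ 5 = 1 ^ 5 + |b| ^ 5 := by rw [one_pow]
      _ ≤ (1 + |b|) ^ 5 := pow_add_pow_le zero_le_one (abs_nonneg b) (by norm_num)
      _ ≤ (1 + |a| + |b|) ^ 5 := by gcongr; linarith [abs_nonneg a]
  calc |f b| ≤ C * (1 + |b| ^ 5) := h3 b
    _ ≤ C * (1 + |a| + |b|) ^ 5 := by gcongr

lemma abs_apply_mul_le_of_growth (hC : 0 < C) (h3 : ∀ a : ℝ, |f a| ≤ C * (1 + |a| ^ 5))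
    (a b : ℝ) : |f b * b| ≤ C * (1 + |a| + |b|) ^ 6 :=
  calc |f b * b| = |f b| * |b| := abs_mul _ _
    _ ≤ C * (1 + |a| + |b|) ^ 5 * (1 + |a| + |b|) := by
        gcongr
        · exact abs_apply_le_of_growth hC h3 a b
        · linarith [abs_nonneg a]
    _ = C * (1 + |a| + |b|) ^ 6 := by ring

lemma abs_sub_mul_add_mul_sub_le_of_growth (hC : 0 < C)
    (h2 : ∀ a b : ℝ, |f a - f b| ≤ C * (1 + |a| + |b|) ^ 4 * |a - b|)
    (h3 : ∀ a : ℝ, |f a| ≤ C * (1 + |a| ^ 5)) (a b : ℝ) :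
    |(f a - f b) * b + f b * (a - b)| ≤ 2 * C * (1 + |a| + |b|) ^ 5 * |a - b| :=
  calc |(f a - f b) * b + f b * (a - b)|
      ≤ |f a - f b| * |b| + |f b| * |a - b| := by
        rw [← abs_mul, ← abs_mul]
        exact abs_add_le _ _
    _ ≤ C * (1 + |a| + |b|) ^ 4 * |a - b| * (1 + |a| + |b|) +
          C * (1 + |a| + |b|) ^ 5 * |a - b| := by
        gcongr
        · exact h2 a b
        · linarith [abs_nonneg a]
        · exact abs_apply_le_of_growth hC h3 a b
    _ = 2 * C * (1 + |a| + |b|) ^ 5 * |a - b| := by ring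

end GrowthBounds

lemma cutoff_pairing_ge {β C : ℝ} {f : ℝ → ℝ} (hβ : 0 < β) (hC : 0 < C)
    (h1 : ∀ a b : ℝ, β * (1 + |a| + |b|) ^ 4 * (a - b) ^ 2 ≤ (f a - f b) * (a - b))
    (h2 : ∀ a b : ℝ, |f a - f b| ≤ C * (1 + |a| + |b|) ^ 4 * |a - b|)
    (h3 : ∀ a : ℝ, |f a| ≤ C * (1 + |a| ^ 5)) (a b ψ₁ ψ₂ : ℝ) :
    β / 2 * ψ₁ ^ 2 * (1 + |a| + |b|) ^ 4 * (a - b) ^ 2 -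
        (2 * C ^ 2 / β + C) * (ψ₁ - ψ₂) ^ 2 * (1 + |a| + |b|) ^ 6 ≤
      (ψ₁ * f a - ψ₂ * f b) * (ψ₁ * a - ψ₂ * b) := by
  rw [mul_sub_mul_mul_mul_sub_mul_eq]
  set M := 1 + |a| + |b|
  set d := ψ₁ - ψ₂
  set X := (f a - f b) * b + f b * (a - b)
  have monotone_term :
      ψ₁ ^ 2 * (β * M ^ 4 * (a - b) ^ 2) ≤ ψ₁ ^ 2 * ((f a - f b) * (a - b)) :=
    mul_le_mul_of_nonneg_left (h1 a b) (sq_nonneg ψ₁)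
  have cross_term : |ψ₁ * d * X| ≤ (|ψ₁| * M ^ 2 * |a - b|) * (2 * C * |d| * M ^ 3) :=
    calc |ψ₁ * d * X| = |ψ₁| * |d| * |X| := by rw [abs_mul, abs_mul]
      _ ≤ |ψ₁| * |d| * (2 * C * M ^ 5 * |a - b|) := by
          gcongr
          exact abs_sub_mul_add_mul_sub_le_of_growth hC h2 h3 a b
      _ = (|ψ₁| * M ^ 2 * |a - b|) * (2 * C * |d| * M ^ 3) := by ring
  have young := mul_le_half_mul_sq_add_sq_div hβ (|ψ₁| * M ^ 2 * |a - b|) (2 * C * |d| * M ^ 3)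
  have young_rhs : β / 2 * (|ψ₁| * M ^ 2 * |a - b|) ^ 2 + (2 * C * |d| * M ^ 3) ^ 2 / (2 * β) =
      β / 2 * ψ₁ ^ 2 * M ^ 4 * (a - b) ^ 2 + 2 * C ^ 2 / β * d ^ 2 * M ^ 6 := by
    simp only [mul_pow, sq_abs]
    field_simp
  have last_term : d ^ 2 * -(C * M ^ 6) ≤ d ^ 2 * (f b * b) :=
    mul_le_mul_of_nonneg_left (abs_le.mp (abs_apply_mul_le_of_growth hC h3 a b)).1 (sq_nonneg d)
  linarith [neg_abs_le (ψ₁ * d * X)]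

theorem stmt11_general (β C L : ℝ) (hβ : 0 < β) (hC : 0 < C) (f : ℝ → ℝ)
    (h1 : ∀ a b : ℝ, β * (1 + |a| + |b|) ^ 4 * (a - b) ^ 2 ≤ (f a - f b) * (a - b))
    (h2 : ∀ a b : ℝ, |f a - f b| ≤ C * (1 + |a| + |b|) ^ 4 * |a - b|)
    (h3 : ∀ a : ℝ, |f a| ≤ C * (1 + |a| ^ 5)) :
    ∃ C₁ : ℝ, 0 < C₁ ∧ ∀ a b r ψ₁ ψ₂ : ℝ, 0 ≤ r →
      ψ₁ ∈ Set.Icc (0 : ℝ) 1 → ψ₂ ∈ Set.Icc (0 : ℝ) 1 → |ψ₁ - ψ₂| ≤ L * r →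
      β / 2 * ψ₁ ^ 2 * (1 + |a| + |b|) ^ 4 * (a - b) ^ 2 -
          C₁ * r ^ 2 * (1 + |a| ^ 6 + |b| ^ 6) ≤
        (ψ₁ * f a - ψ₂ * f b) * (ψ₁ * a - ψ₂ * b) := by
  set K := 2 * C ^ 2 / β + C
  refine ⟨3 ^ 5 * K * L ^ 2 + 1, by positivity, ?_⟩
  intro a b r ψ₁ ψ₂ _ _ _ hψ
  have hd : (ψ₁ - ψ₂) ^ 2 ≤ L ^ 2 * r ^ 2 := by
    rw [← sq_abs, ← mul_pow]
    exact pow_le_pow_left₀ (abs_nonneg _) hψ 2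
  have hM : (1 + |a| + |b|) ^ 6 ≤ 3 ^ 5 * (1 + |a| ^ 6 + |b| ^ 6) := by
    simpa using add_add_pow_succ_le zero_le_one (abs_nonneg a) (abs_nonneg b) 5
  have hdM : (ψ₁ - ψ₂) ^ 2 * (1 + |a| + |b|) ^ 6 ≤
      L ^ 2 * r ^ 2 * (3 ^ 5 * (1 + |a| ^ 6 + |b| ^ 6)) :=
    mul_le_mul hd hM (by positivity) (by positivity)
  have hK : 0 ≤ K := by positivity
  have hrN : 0 ≤ r ^ 2 * (1 + |a| ^ 6 + |b| ^ 6) := by positivity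
  linarith [mul_le_mul_of_nonneg_left hdM hK, cutoff_pairing_ge hβ hC h1 h2 h3 a b ψ₁ ψ₂]

/-- Pointwise lower bound for the cut-off nonlinear term: under the quintic-type
coercivity and growth bounds (i)–(iii) on `f`, there is `C₁ > 0` such that for all
`a, b`, `r ≥ 0`, and `ψ₁, ψ₂ ∈ [0,1]` with `|ψ₁ − ψ₂| ≤ L r`,
`(ψ₁ f(a) − ψ₂ f(b))(ψ₁ a − ψ₂ b) ≥ (β/2) ψ₁² (1+|a|+|b|)⁴ (a−b)² − C₁ r² (1+|a|⁶+|b|⁶)`. -/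
theorem stmt11 (β C L : ℝ) (hβ : 0 < β) (hC : 0 < C) (hL : 0 ≤ L) (f : ℝ → ℝ)
    (h1 : ∀ a b : ℝ, β * (1 + |a| + |b|) ^ 4 * (a - b) ^ 2 ≤ (f a - f b) * (a - b))
    (h2 : ∀ a b : ℝ, |f a - f b| ≤ C * (1 + |a| + |b|) ^ 4 * |a - b|)
    (h3 : ∀ a : ℝ, |f a| ≤ C * (1 + |a| ^ 5)) :
    ∃ C₁ : ℝ, 0 < C₁ ∧ ∀ a b r ψ₁ ψ₂ : ℝ, 0 ≤ r →
      ψ₁ ∈ Set.Icc (0 : ℝ) 1 → ψ₂ ∈ Set.Icc (0 : ℝ) 1 → |ψ₁ - ψ₂| ≤ L * r →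
      β / 2 * ψ₁ ^ 2 * (1 + |a| + |b|) ^ 4 * (a - b) ^ 2 -
          C₁ * r ^ 2 * (1 + |a| ^ 6 + |b| ^ 6) ≤
        (ψ₁ * f a - ψ₂ * f b) * (ψ₁ * a - ψ₂ * b) :=
  stmt11_general β C L hβ hC f h1 h2 h3
end
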